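/- Let μ ∈ (0,1/2) and λ = 1/√5. There exists an integer N ≥ 2, depending only on μ, such that for every r₀ > 0, setting r = N r₀ and γ(t) = (r cos t, r sin t, μ r t) (so γ'(t) = (−r sin t, r cos t, μ r)), one has: for every τ ∈ ℝ and every point p = (r₀ cos θ, r₀ sin θ, z) with θ, z ∈ ℝ, ⟨γ'(τ), p − γ(τ)⟩ ≤ λ‖γ'(τ)‖‖p − γ(τ)‖; that is, the open cone of half-aperture arccos(1/√5) with vertex γ(τ) directed by γ'(τ) does not meet the thin cylinder {(x,y,z) : x² + y² = r₀²}. -/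

import Mathlib

open scoped RealInnerProductSpace
open Set

/-- The helix `t ↦ (r cos t, r sin t, μ r t)` in `ℝ³`. -/
noncomputable def helix (r μ t : ℝ) : EuclideanSpace ℝ (Fin 3) :=
  WithLp.toLp 2 ![r * Real.cos t, r * Real.sin t, μ * r * t]

/-- The derivative `t ↦ (−r sin t, r cos t, μ r)` of the helix. -/
noncomputable def helixD (r μ t : ℝ) : EuclideanSpace ℝ (Fin 3) :=
  WithLp.toLp 2 ![-(r * Real.sin t), r * Real.cos t, μ * r]

/-- A point `(r₀ cos θ, r₀ sin θ, z)` of the thin cylinder of radius `r₀`. -/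
noncomputable def cylPt (r₀ θ z : ℝ) : EuclideanSpace ℝ (Fin 3) :=
  WithLp.toLp 2 ![r₀ * Real.cos θ, r₀ * Real.sin θ, z]

/-!
With `r = N r₀`, `φ = θ - τ` and `w = z - μ r τ` the height difference, the inner product is
`r (r₀ sin φ + μ w)`, `‖γ'(τ)‖² = r² (1 + μ²)` and `‖p - γ(τ)‖² = d + w²`, where the horizontal
part `d = r₀² + r² - 2 r r₀ cos φ` is at least `(r - r₀)²`. So the squared claim is
`5 (r₀ sin φ + μ w)² ≤ (1 + μ²)(d + w²)`. A weighted Cauchy–Schwarz inequality reduces this to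
`5 r₀² ≤ (1 - 4μ²) d`, the weight on `w` being admissible exactly because `μ < 1/2`; and that
holds as soon as `(1 - 4μ²)(N - 1)² ≥ 5`.
-/

lemma le_inv_sqrt_mul_mul_of_mul_sq_le {k I X Y : ℝ} (hk : 0 < k) (hX : 0 ≤ X) (hY : 0 ≤ Y)
    (h : k * I ^ 2 ≤ X ^ 2 * Y ^ 2) : I ≤ 1 / Real.sqrt k * X * Y := by
  have hsk : 0 < Real.sqrt k := Real.sqrt_pos.mpr hk
  have : Real.sqrt k * I ≤ X * Y :=
    le_of_sq_le_sq (by rw [mul_pow, Real.sq_sqrt hk.le, mul_pow]; exact h) (by positivity)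
  rw [show 1 / Real.sqrt k * X * Y = X * Y / Real.sqrt k by ring, le_div_iff₀ hsk]
  linarith

lemma five_mul_sq_add_le {μ a w d : ℝ} (hμ : 4 * μ ^ 2 < 1) (h : 5 * a ^ 2 ≤ (1 - 4 * μ ^ 2) * d) :
    5 * (a + μ * w) ^ 2 ≤ (1 + μ ^ 2) * (d + w ^ 2) := by
  have hb : 0 < 1 - 4 * μ ^ 2 := by linarith
  refine le_of_mul_le_mul_left ?_ hb
  -- the difference of the two sides, times `1 - 4μ²`, is at least `(5μa - (1 - 4μ²)w)²`
  nlinarith [sq_nonneg (5 * μ * a - (1 - 4 * μ ^ 2) * w), sq_nonneg μ]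

lemma exists_two_le_le_mul_sub_one_sq {b : ℝ} (hb : 0 < b) (c : ℝ) :
    ∃ N : ℕ, 2 ≤ N ∧ c ≤ b * ((N : ℝ) - 1) ^ 2 := by
  obtain ⟨n, hn⟩ := exists_nat_gt (c / b)
  refine ⟨n + 2, by omega, ?_⟩
  rw [div_lt_iff₀ hb] at hn
  push_cast
  nlinarith [sq_nonneg (n : ℝ), (Nat.cast_nonneg n : (0 : ℝ) ≤ n)]

section Coordinates

variable (r μ τ r₀ θ z : ℝ)

lemma norm_helixD_sq : ‖helixD r μ τ‖ ^ 2 = r ^ 2 * (1 + μ ^ 2) := by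
  simp only [helixD, EuclideanSpace.real_norm_sq_eq, Fin.sum_univ_three, Fin.isValue,
    Matrix.cons_val_zero, even_two, Even.neg_pow, Matrix.cons_val_one, Matrix.cons_val]
  linear_combination r ^ 2 * Real.sin_sq_add_cos_sq τ

lemma inner_helixD_cylPt_sub_helix :
    ⟪helixD r μ τ, cylPt r₀ θ z - helix r μ τ⟫ =
      r * (r₀ * Real.sin (θ - τ) + μ * (z - μ * r * τ)) := by
  simp only [helixD, cylPt, helix, PiLp.inner_apply, PiLp.sub_apply, RCLike.inner_apply,
    Real.ringHom_apply, Fin.sum_univ_three, Fin.isValue, Matrix.cons_val_zero, mul_neg,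
    Matrix.cons_val_one, Matrix.cons_val, Real.sin_sub]
  ring

lemma norm_cylPt_sub_helix_sq :
    ‖cylPt r₀ θ z - helix r μ τ‖ ^ 2 =
      r₀ ^ 2 + r ^ 2 - 2 * r * r₀ * Real.cos (θ - τ) + (z - μ * r * τ) ^ 2 := by
  simp only [cylPt, helix, EuclideanSpace.real_norm_sq_eq, PiLp.sub_apply, Fin.sum_univ_three,
    Fin.isValue, Matrix.cons_val_zero, Matrix.cons_val_one, Matrix.cons_val, Real.cos_sub]
  linear_combination r₀ ^ 2 * Real.sin_sq_add_cos_sq θ + r ^ 2 * Real.sin_sq_add_cos_sq τ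

end Coordinates

/-- For `μ ∈ (0,1/2)` and `λ = 1/√5`, there is an integer `N ≥ 2`
(depending only on `μ`) such that, for `r = N r₀`, the open cone of half-aperture
`arccos(1/√5)` attached to the helix of radius `r` at any of its points does not meet the
thin cylinder `{x² + y² = r₀²}`. -/
theorem helix_cone_avoids_thin_cylinder (μ : ℝ) (hμ0 : 0 < μ) (hμ : μ < 1 / 2) :
    ∃ N : ℕ, 2 ≤ N ∧
      ∀ r₀ : ℝ, 0 < r₀ →
        ∀ τ θ z : ℝ,
          ⟪helixD ((N : ℝ) * r₀) μ τ, cylPt r₀ θ z - helix ((N : ℝ) * r₀) μ τ⟫ ≤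
            (1 / Real.sqrt 5) * ‖helixD ((N : ℝ) * r₀) μ τ‖ *
              ‖cylPt r₀ θ z - helix ((N : ℝ) * r₀) μ τ‖ := by
  have hμ2 : 4 * μ ^ 2 < 1 := by nlinarith
  obtain ⟨N, hN2, hN⟩ := exists_two_le_le_mul_sub_one_sq (by linarith : 0 < 1 - 4 * μ ^ 2) 5
  refine ⟨N, hN2, fun r₀ hr₀ τ θ z => ?_⟩
  set r := (N : ℝ) * r₀
  have hr : 0 < r := mul_pos (by positivity) hr₀
  refine le_inv_sqrt_mul_mul_of_mul_sq_le (by norm_num) (norm_nonneg _) (norm_nonneg _) ?_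
  rw [inner_helixD_cylPt_sub_helix, norm_helixD_sq, norm_cylPt_sub_helix_sq]
  have hgap : (r - r₀) ^ 2 ≤ r₀ ^ 2 + r ^ 2 - 2 * r * r₀ * Real.cos (θ - τ) := by
    nlinarith [mul_nonneg (mul_nonneg hr.le hr₀.le) (sub_nonneg.mpr (Real.cos_le_one (θ - τ)))]
  have hsin : 5 * (r₀ * Real.sin (θ - τ)) ^ 2 ≤ (1 - 4 * μ ^ 2) * (r - r₀) ^ 2 := by
    have : r - r₀ = ((N : ℝ) - 1) * r₀ := by ring
    rw [this]
    nlinarith [Real.sin_sq_le_one (θ - τ), mul_le_mul_of_nonneg_right hN (sq_nonneg r₀)]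
  have key := five_mul_sq_add_le (w := z - μ * r * τ) hμ2
    (hsin.trans (mul_le_mul_of_nonneg_left hgap (by linarith)))
  nlinarith [mul_le_mul_of_nonneg_left key (sq_nonneg r)]
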